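/- arXiv:2107.13989 — 8 statements merged into one kernel-verified Lean document; each statement's English description precedes it below -/
import Mathlib

section
/- Let J be a small category, F : J ⥤ Grp a functor, and let g_i ∈ F(i) be an element for each object i of J. Then the following are equivalent: (a) for every morphism h : i ⟶ j of J, every group G, and every group homomorphism f : F(j) → G, conjugation by f(g_j) and conjugation by f(F(h)(g_i)) are equal as automorphisms of G; (b) for every morphism h : i ⟶ j of J one has F(h)(g_i) = g_j, i.e. the family (g_i)_{i ∈ ob J} is compatible. -/
open CategoryTheory

universe u

/-- For a functor `F : J ⥤ Grp` and elements `g i ∈ F(i)`, the following are equivalent: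
(a) for every `h : i ⟶ j` in `J`, every group `G` and every group homomorphism
`f : F(j) → G`, conjugation by `f (g j)` equals conjugation by `f (F(h) (g i))` as
automorphisms of `G`; (b) `F(h) (g i) = g j` for every `h : i ⟶ j`, i.e. the family
`(g i)_i` is compatible. -/
theorem conj_eq_iff_compatible {J : Type u} [SmallCategory J] (F : J ⥤ GrpCat.{u})
    (g : ∀ i : J, F.obj i) :
    (∀ (i j : J) (h : i ⟶ j) (G : GrpCat.{u}) (f : F.obj j ⟶ G),
        MulAut.conj (f (g j)) = MulAut.conj (f (F.map h (g i)))) ↔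
      ∀ (i j : J) (h : i ⟶ j), F.map h (g i) = g j := by
  constructor
  · intro H i j h
    classical
    set X : Type u := (F.obj j) ⊕ PUnit.{u+1} with hX
    let f : F.obj j →* Equiv.Perm X :=
      { toFun := fun a => Equiv.sumCongr (Equiv.mulLeft a) (Equiv.refl _)
        map_one' := by ext x; cases x <;> simp
        map_mul' := fun a b => by
          ext x
          cases x with
          | inl v => exact congrArg Sum.inl (mul_assoc a b v)
          | inr v => rfl }
    have key := H i j h (GrpCat.of (Equiv.Perm X)) (GrpCat.ofHom f)
    have hσ : ∀ σ : Equiv.Perm X,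
        f (g j) * σ * (f (g j))⁻¹ = f (F.map h (g i)) * σ * (f (F.map h (g i)))⁻¹ := by
      intro σ
      have := congrArg (fun e : MulAut (Equiv.Perm X) => e σ) key
      simpa [MulAut.conj] using this
    set d : F.obj j := (F.map h (g i))⁻¹ * g j with hd
    have hcomm : ∀ σ : Equiv.Perm X, f d * σ = σ * f d := by
      intro σ
      have h1 := congrArg
        (fun x => (f (F.map h (g i)))⁻¹ * x * f (g j)) (hσ σ)
      simp only [mul_assoc, inv_mul_cancel_left, inv_mul_cancel, mul_one] at h1
      simp only [hd, map_mul, map_inv]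
      simp only [mul_assoc]
      exact h1
    have heval := congrArg
      (fun τ : Equiv.Perm X => τ (Sum.inl (1 : F.obj j)))
      (hcomm (Equiv.swap (Sum.inl (1 : F.obj j)) (Sum.inr PUnit.unit)))
    simp only [Equiv.Perm.mul_apply] at heval
    have hfd : ∀ x : F.obj j, f d (Sum.inl x) = Sum.inl (d * x) := fun x => rfl
    rw [Equiv.swap_apply_left] at heval
    rw [hfd] at heval
    have hfr : f d (Sum.inr PUnit.unit) = Sum.inr PUnit.unit := rfl
    rw [hfr, mul_one] at heval
    by_cases hd1 : d = 1
    · have : (F.map h (g i))⁻¹ * g j = 1 := by rw [← hd]; exact hd1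
      exact (inv_mul_eq_one.mp this)
    · rw [Equiv.swap_apply_of_ne_of_ne (fun h' => hd1 (Sum.inl.inj h')) (by simp)] at heval
      simp at heval
  · intro H i j h G f
    rw [H i j h]
end

section
/- Let G be a group and let G * F⟨x⟩ denote the free product (coproduct of groups) of G with the free group on one generator x, with canonical injections inl : G → G * F⟨x⟩ and inr : F⟨x⟩ → G * F⟨x⟩. If g, h ∈ G satisfy inl(g) · inr(x) · inl(g)⁻¹ = inl(h) · inr(x) · inl(h)⁻¹ in G * F⟨x⟩, then g = h. -/
universe u

open Classical in
/-- In the free product `G ∗ F⟨x⟩` of a group `G` with the free group on one generator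
`x`, if `inl g · inr x · (inl g)⁻¹ = inl h · inr x · (inl h)⁻¹` then `g = h`. -/
theorem eq_of_conj_freeGroup_generator_eq {G : Type u} [Group G] (g h : G)
    (hc : (Monoid.Coprod.inl g : Monoid.Coprod G (FreeGroup Unit)) *
            Monoid.Coprod.inr (FreeGroup.of ()) * (Monoid.Coprod.inl g)⁻¹ =
          Monoid.Coprod.inl h * Monoid.Coprod.inr (FreeGroup.of ()) *
            (Monoid.Coprod.inl h)⁻¹) :
    g = h := by
  -- permutation bumping the integer coordinate at the identity of G
  let e : Equiv.Perm (G × ℤ) :=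
    { toFun := fun p => (p.1, p.2 + if p.1 = 1 then 1 else 0)
      invFun := fun p => (p.1, p.2 - if p.1 = 1 then 1 else 0)
      left_inv := fun p => by simp
      right_inv := fun p => by simp }
  let φL : G →* Equiv.Perm (G × ℤ) :=
    { toFun := fun a => (Equiv.mulLeft a).prodCongr (Equiv.refl ℤ)
      map_one' := by ext p <;> simp
      map_mul' := fun a b => by ext p <;> simp [mul_assoc] }
  let φ : Monoid.Coprod G (FreeGroup Unit) →* Equiv.Perm (G × ℤ) :=
    Monoid.Coprod.lift φL (FreeGroup.lift fun _ => e)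
  have h1 := congrArg φ hc
  simp only [map_mul, map_inv, Monoid.Coprod.lift_apply_inl,
    Monoid.Coprod.lift_apply_inr, FreeGroup.lift_apply_of, φ] at h1
  have h2 := congrArg (fun f : Equiv.Perm (G × ℤ) => f (g, (0 : ℤ))) h1
  simp only [Equiv.Perm.mul_apply, φL, e] at h2
  simp [Equiv.prodCongr, Equiv.mulLeft, Equiv.Perm.inv_def] at h2
  have h3 : h⁻¹ * g = 1 := by
    by_contra hx
    simp [hx, Prod.ext_iff] at h2
  exact (inv_mul_eq_one.mp h3).symm
end

section
/- Let J be a small category and F : J ⥤ Grp a functor. Given a compatible family (g_i)_{i ∈ ob J} ∈ lim F and a natural automorphism ψ ∈ Aut(Id_J), the assignment sending each natural transformation μ : F ⟶ G in Grp^J to the family of maps whose component at an object k of J is G(ψ_k) ∘ inn_{μ_k(g_k)} : G(k) → G(k) defines, for each μ, a natural automorphism π_μ : G ≅ G, and the resulting family (π_μ)_μ is a natural automorphism of the projection functor F/(Grp^J) → Grp^J (i.e. π_{ν ∘ μ} ∘ ν = ν ∘ π_μ for all composable μ : F ⟶ G and ν : G ⟶ H). -/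
open CategoryTheory

universe u

/-- The subgroup of compatible families of the product group `∏ i, F(i)`:
those `(g_i)_i` with `F(f)(g j) = g k` for every `f : j ⟶ k` in `J`. -/
def compatibleSubgroup {J : Type u} [SmallCategory J] (F : J ⥤ GrpCat.{u}) :
    Subgroup (∀ i : J, F.obj i) where
  carrier := {g | ∀ (j k : J) (f : j ⟶ k), F.map f (g j) = g k}
  one_mem' := by intro j k f; simp
  mul_mem' := by intro a b ha hb j k f; simp [ha j k f, hb j k f]
  inv_mem' := by intro a ha j k f; simp [ha j k f]

/-- Conjugation as an isomorphism in `Grp`. -/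
def conjGrpIso (G : GrpCat.{u}) (a : G) : G ≅ G :=
  MulEquiv.toGrpIso (MulAut.conj a)

/-- The component iso `π_μ` at an object `k`. -/
def piIsoApp {J : Type u} [SmallCategory J] {F : J ⥤ GrpCat.{u}}
    (g : compatibleSubgroup F) (ψ : Aut (𝟭 J)) (G : J ⥤ GrpCat.{u}) (μ : F ⟶ G)
    (k : J) : G.obj k ≅ G.obj k :=
  conjGrpIso (G.obj k) (μ.app k ((g : ∀ i : J, F.obj i) k)) ≪≫ G.mapIso (ψ.app k)

lemma piIsoApp_apply {J : Type u} [SmallCategory J] {F : J ⥤ GrpCat.{u}}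
    (g : compatibleSubgroup F) (ψ : Aut (𝟭 J)) (G : J ⥤ GrpCat.{u}) (μ : F ⟶ G)
    (k : J) (x : G.obj k) :
    (piIsoApp g ψ G μ k).hom x =
      G.map (ψ.hom.app k)
        (μ.app k ((g : ∀ i : J, F.obj i) k) * x *
          (μ.app k ((g : ∀ i : J, F.obj i) k))⁻¹) := rfl

/-- Given a compatible family `(g_i)_i ∈ lim F` and a natural automorphism `ψ ∈ Aut(Id_J)`,
the assignment sending each `μ : F ⟶ G` in `Grp^J` to the family of maps with component
`G(ψ_k) ∘ inn_{μ_k(g_k)} : G(k) → G(k)` at each object `k` defines a natural automorphism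
`π_μ : G ≅ G` for each `μ`, and the family `(π_μ)_μ` is a natural automorphism of the
projection functor `F/(Grp^J) ⥤ Grp^J`, i.e. `π_{ν∘μ} ∘ ν = ν ∘ π_μ` for all composable
`μ : F ⟶ G` and `ν : G ⟶ H`. -/
theorem determined_family_is_extended_inner {J : Type u} [SmallCategory J]
    (F : J ⥤ GrpCat.{u}) (g : compatibleSubgroup F) (ψ : Aut (𝟭 J)) :
    ∃ π : ∀ (G : J ⥤ GrpCat.{u}), (F ⟶ G) → (G ≅ G),
      (∀ (G : J ⥤ GrpCat.{u}) (μ : F ⟶ G) (k : J) (x : G.obj k),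
          (π G μ).hom.app k x =
            G.map (ψ.hom.app k)
              (μ.app k ((g : ∀ i : J, F.obj i) k) * x *
                (μ.app k ((g : ∀ i : J, F.obj i) k))⁻¹)) ∧
        ∀ (G H : J ⥤ GrpCat.{u}) (μ : F ⟶ G) (ν : G ⟶ H),
          ν ≫ (π H (μ ≫ ν)).hom = (π G μ).hom ≫ ν := by
  have hg := g.2
  refine ⟨fun G μ => NatIso.ofComponents (piIsoApp g ψ G μ) ?_, ?_, ?_⟩
  · intro j k f
    ext x
    show (piIsoApp g ψ G μ k).hom (G.map f x) = G.map f ((piIsoApp g ψ G μ j).hom x)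
    have hnat : G.map f (μ.app j ((g : ∀ i : J, F.obj i) j)) =
        μ.app k ((g : ∀ i : J, F.obj i) k) := by
      have := congrArg (fun h => h ((g : ∀ i : J, F.obj i) j)) (μ.naturality f)
      rw [← hg j k f]
      exact this.symm
    have hψ : ∀ z : G.obj j, G.map (ψ.hom.app k) (G.map f z) =
        G.map f (G.map (ψ.hom.app j) z) := by
      intro z
      have h1 : f ≫ ψ.hom.app k = ψ.hom.app j ≫ f := ψ.hom.naturality f
      have := congrArg (fun h => h z) (congrArg G.map h1)
      simpa [G.map_comp] using this
    rw [piIsoApp_apply, piIsoApp_apply, ← hnat, ← map_inv, ← map_mul, ← map_mul, hψ]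
  · intro G μ k x
    exact piIsoApp_apply g ψ G μ k x
  · intro G H μ ν
    ext k x
    show (piIsoApp g ψ H (μ ≫ ν) k).hom (ν.app k x) =
      ν.app k ((piIsoApp g ψ G μ k).hom x)
    have hnat : ∀ y : G.obj k, ν.app k (G.map (ψ.hom.app k) y) =
        H.map (ψ.hom.app k) (ν.app k y) := fun y =>
      congrArg (fun h => h y) (ν.naturality (ψ.hom.app k))
    rw [piIsoApp_apply, piIsoApp_apply, hnat]
    simp
end

section
/- Let J be a small category and F : J ⥤ Grp a functor. Suppose (g_i)_{i ∈ ob J} ∈ lim F is a compatible family and ψ ∈ Aut(Id_J) is a natural automorphism of the identity functor on J such that for every natural transformation μ : F ⟶ G in Grp^J and every object k of J, the automorphism G(ψ_k) ∘ inn_{μ_k(g_k)} of G(k) is the identity. Then g_i is the unit element of F(i) for every object i of J, and ψ is the identity natural automorphism of Id_J. -/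
open CategoryTheory

universe u

section Aux

variable {J : Type u} [SmallCategory J]

/-- The functor `i ↦ FreeGroup (j ⟶ i)`. -/
def homFreeFunctor (j : J) : J ⥤ GrpCat.{u} :=
  coyoneda.obj (Opposite.op j) ⋙ GrpCat.free

/-- The trivial natural transformation into `homFreeFunctor j`. -/
def trivialTrans (F : J ⥤ GrpCat.{u}) (j : J) : F ⟶ homFreeFunctor j where
  app i := GrpCat.ofHom 1
  naturality := by intros; rfl

/-- The endofunctor of `Grp` given by free product with `FreeGroup PUnit`. -/
def coprodWithZ : GrpCat.{u} ⥤ GrpCat.{u} where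
  obj K := GrpCat.of (Monoid.Coprod K (FreeGroup PUnit.{u + 1}))
  map f := GrpCat.ofHom (Monoid.Coprod.map f.hom (MonoidHom.id _))
  map_id _ := GrpCat.hom_ext (Monoid.Coprod.hom_ext rfl rfl)
  map_comp _ _ := GrpCat.hom_ext (Monoid.Coprod.hom_ext rfl rfl)

/-- The natural inclusion `F ⟶ F ⋙ coprodWithZ`. -/
def inlTrans (F : J ⥤ GrpCat.{u}) : F ⟶ F ⋙ coprodWithZ where
  app i := GrpCat.ofHom Monoid.Coprod.inl
  naturality := by intros; rfl

/-- Left regular representation on `K × Bool` (acting on the first factor). -/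
def leftRegularProd (K : Type u) [Group K] : K →* Equiv.Perm (K × Bool) where
  toFun g := (Equiv.mulLeft g).prodCongr (Equiv.refl Bool)
  map_one' := by ext p <;> simp
  map_mul' a b := by ext p <;> simp [mul_assoc]

theorem eq_one_of_coprod_central {K : Type u} [Group K] (g : K)
    (hc : ∀ x : Monoid.Coprod K (FreeGroup PUnit.{u + 1}),
      Monoid.Coprod.inl g * x * (Monoid.Coprod.inl g)⁻¹ = x) : g = 1 := by
  classical
  by_contra hg
  set τ : Equiv.Perm (K × Bool) := Equiv.swap ((1 : K), false) ((1 : K), true) with hτ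
  set φ : Monoid.Coprod K (FreeGroup PUnit.{u + 1}) →* Equiv.Perm (K × Bool) :=
    Monoid.Coprod.lift (leftRegularProd K) (FreeGroup.lift fun _ => τ) with hφ
  have h1 := hc (Monoid.Coprod.inr (FreeGroup.of PUnit.unit))
  have h2 : Monoid.Coprod.inl g * Monoid.Coprod.inr (FreeGroup.of PUnit.unit)
      = Monoid.Coprod.inr (FreeGroup.of PUnit.unit) * Monoid.Coprod.inl g :=
    mul_inv_eq_iff_eq_mul.mp h1
  have h3 := congrArg φ h2
  simp only [map_mul, hφ, Monoid.Coprod.lift_apply_inl, Monoid.Coprod.lift_apply_inr,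
    FreeGroup.lift_apply_of] at h3
  have h4 := DFunLike.congr_fun h3 ((g⁻¹, false) : K × Bool)
  have hne : g⁻¹ ≠ 1 := inv_ne_one.mpr hg
  simp only [Equiv.Perm.mul_apply] at h4
  rw [show τ (g⁻¹, false) = (g⁻¹, false) from
      Equiv.swap_apply_of_ne_of_ne (by simp [hne]) (by simp [hne])] at h4
  simp only [leftRegularProd, MonoidHom.coe_mk, OneHom.coe_mk, Equiv.prodCongr_apply,
    Prod.map, Equiv.coe_mulLeft, Equiv.refl_apply, mul_inv_cancel] at h4
  rw [hτ, Equiv.swap_apply_left] at h4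
  simpa using congrArg Prod.snd h4

end Aux

/-- If a compatible family `(g_i)_i ∈ lim F` and a natural automorphism `ψ ∈ Aut(Id_J)`
are such that for every `μ : F ⟶ G` in `Grp^J` and every object `k`, the automorphism
`G(ψ_k) ∘ inn_{μ_k(g_k)}` of `G(k)` is the identity, then each `g_i` is the unit of
`F(i)` and `ψ` is the identity natural automorphism of `Id_J`. -/
theorem trivial_of_determines_identity {J : Type u} [SmallCategory J] (F : J ⥤ GrpCat.{u})
    (g : compatibleSubgroup F) (ψ : Aut (𝟭 J))
    (h : ∀ (G : J ⥤ GrpCat.{u}) (μ : F ⟶ G) (k : J) (x : G.obj k),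
      G.map (ψ.hom.app k)
          (μ.app k ((g : ∀ i : J, F.obj i) k) * x *
            (μ.app k ((g : ∀ i : J, F.obj i) k))⁻¹) = x) :
    (∀ i : J, (g : ∀ i : J, F.obj i) i = 1) ∧ ψ = 1 := by
  -- First: ψ is the identity.
  have hψ : ∀ j : J, ψ.hom.app j = 𝟙 j := by
    intro j
    have h1 := h (homFreeFunctor j) (trivialTrans F j) j (FreeGroup.of (𝟙 j))
    have hone : (trivialTrans F j).app j ((g : ∀ i : J, F.obj i) j)
        = (1 : FreeGroup (j ⟶ j)) := rfl
    rw [hone] at h1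
    erw [one_mul, inv_one, mul_one] at h1
    have h2 : FreeGroup.of (𝟙 j ≫ ψ.hom.app j) = FreeGroup.of (𝟙 j) := by
      rw [← h1]
      exact (FreeGroup.map.of).symm
    have := FreeGroup.of_injective h2
    simpa using this
  constructor
  · -- Each g_i is trivial.
    intro k
    apply eq_one_of_coprod_central ((g : ∀ i : J, F.obj i) k)
    intro x
    have h1 := h (F ⋙ coprodWithZ) (inlTrans F) k x
    rw [hψ k] at h1
    have e := ConcreteCategory.congr_hom ((F ⋙ coprodWithZ).map_id k)
      (Monoid.Coprod.inl ((g : ∀ i : J, F.obj i) k) * x *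
        (Monoid.Coprod.inl ((g : ∀ i : J, F.obj i) k))⁻¹)
    exact e.symm.trans h1
  · -- ψ = 1.
    ext j
    exact hψ j
end

section
/- Let J be a small category and F : J ⥤ Set a functor (a presheaf of sets on J^op, equivalently a covariant Set-valued functor). Then the covariant isotropy group Z(F) of F in the functor category Set^J, i.e. the group of natural automorphisms of the projection functor F/(Set^J) → Set^J, is isomorphic as a group to Aut(Id_J), the group of natural automorphisms of the identity functor on J. -/
open CategoryTheory

universe u

namespace IsotropyAux

variable {J : Type u} [SmallCategory J] (F : J ⥤ Type u)

/-- The coproduct `F ⊔ Hom(j, -)` as an explicit functor. -/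
@[simps]
def Rfun (j : J) : J ⥤ Type u where
  obj k := F.obj k ⊕ (j ⟶ k)
  map f := TypeCat.ofHom (Sum.map (F.map f) (fun h => h ≫ f))
  map_id k := by ext x; cases x <;> simp
  map_comp f g := by ext x; cases x <;> simp

/-- The inclusion `F ⟶ F ⊔ Hom(j,-)`. -/
@[simps]
def RfunIncl (j : J) : F ⟶ Rfun F j where
  app k := TypeCat.ofHom Sum.inl
  naturality k k' f := rfl

/-- The object of `Under F` given by the inclusion into `F ⊔ Hom(j,-)`. -/
def R (j : J) : Under F := Under.mk (RfunIncl F j)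

lemma R_hom_app (j k : J) (a : F.obj k) : (R F j).hom.app k a = Sum.inl a := rfl

/-- The morphism `R j ⟶ A` under `F` classifying an element `x : A.right.obj j`. -/
def classify (A : Under F) (j : J) (x : A.right.obj j) : R F j ⟶ A :=
  Under.homMk
    { app := fun k => TypeCat.ofHom (Sum.elim (A.hom.app k) (fun h => A.right.map h x))
      naturality := by
        intro k k' f
        ext z
        cases z with
        | inl a => exact types_congr_hom (A.hom.naturality f) a
        | inr h =>
            show A.right.map (h ≫ f) x = A.right.map f (A.right.map h x)
            simp }
    (by ext k a; rfl)

lemma classify_right_app (A : Under F) (j : J) (x : A.right.obj j) (k : J)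
    (z : (Rfun F j).obj k) :
    (classify F A j x).right.app k z
      = Sum.elim (A.hom.app k) (fun h => A.right.map h x) z := rfl

/-- The generic element: value of `θ` at `R j` on `inr (𝟙 j)`. -/
def θval (θ : Aut (Under.forget F)) (j : J) : F.obj j ⊕ (j ⟶ j) :=
  (θ.hom.app (R F j)).app j (Sum.inr (𝟙 j))

lemma determination (θ : Aut (Under.forget F)) (A : Under F) (j : J)
    (x : A.right.obj j) :
    (θ.hom.app A).app j x
      = Sum.elim (A.hom.app j) (fun h => A.right.map h x) (θval F θ j) := by
  have h := θ.hom.naturality (classify F A j x)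
  have h2 := types_congr_hom (NatTrans.congr_app h j) (Sum.inr (𝟙 j))
  simp only [Under.forget_map, FunctorToTypes.comp, classify_right_app] at h2
  change (θ.hom.app A).app j (A.right.map (𝟙 j) x) = Sum.elim (A.hom.app j)
    (fun h => A.right.map h x) ((θ.hom.app (R F j)).app j (Sum.inr (𝟙 j))) at h2
  rw [FunctorToTypes.map_id_apply] at h2
  unfold θval
  exact h2

lemma theta_inj (θ : Aut (Under.forget F)) (A : Under F) (j : J) :
    Function.Injective ((θ.hom.app A).app j) := by
  intro x y hxy
  have h := types_congr_hom (NatTrans.congr_app (NatTrans.congr_app θ.hom_inv_id A) j)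
  have hx := h x
  have hy := h y
  simp only [FunctorToTypes.comp, NatTrans.comp_app, NatTrans.id_app,
    types_id_apply] at hx hy
  calc x = (θ.inv.app A).app j ((θ.hom.app A).app j x) := hx.symm
    _ = (θ.inv.app A).app j ((θ.hom.app A).app j y) := by rw [hxy]
    _ = y := hy


lemma θval_inr (θ : Aut (Under.forget F)) (j : J) :
    ∃ h : j ⟶ j, θval F θ j = Sum.inr h := by
  cases hv : θval F θ j with
  | inr h => exact ⟨h, rfl⟩
  | inl c =>
    exfalso
    have h1 := determination F θ (R F j) j (Sum.inr (𝟙 j))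
    have h2 := determination F θ (R F j) j (Sum.inl c)
    rw [hv] at h1 h2
    simp only [Sum.elim_inl] at h1 h2
    have : (Sum.inr (𝟙 j) : F.obj j ⊕ (j ⟶ j)) = Sum.inl c :=
      theta_inj F θ (R F j) j (h1.trans h2.symm)
    exact Sum.inr_ne_inl this

/-- The endomorphism of `j` extracted from `θ`. -/
noncomputable def a (θ : Aut (Under.forget F)) (j : J) : j ⟶ j := (θval_inr F θ j).choose

lemma a_spec (θ : Aut (Under.forget F)) (j : J) :
    θval F θ j = Sum.inr (a F θ j) := (θval_inr F θ j).choose_spec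

lemma determination' (θ : Aut (Under.forget F)) (A : Under F) (j : J)
    (x : A.right.obj j) :
    (θ.hom.app A).app j x = A.right.map (a F θ j) x := by
  rw [determination F θ A j x, a_spec]
  rfl

lemma a_nat (θ : Aut (Under.forget F)) {j j' : J} (f : j ⟶ j') :
    a F θ j ≫ f = f ≫ a F θ j' := by
  have h1 : (θ.hom.app (R F j)).app j' (Sum.inr f)
      = Sum.inr (a F θ j ≫ f) := by
    have hn := types_congr_hom ((θ.hom.app (R F j)).naturality f) (Sum.inr (𝟙 j))
    change (θ.hom.app (R F j)).app j' ((R F j).right.map f (Sum.inr (𝟙 j)))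
      = (R F j).right.map f ((θ.hom.app (R F j)).app j (Sum.inr (𝟙 j))) at hn
    have hmap : ((R F j).right.map f) (Sum.inr (𝟙 j)) = Sum.inr f := by
      show Sum.map (F.map f) (fun h => h ≫ f) (Sum.inr (𝟙 j)) = Sum.inr f
      simp
    rw [hmap] at hn
    rw [hn]
    have hs : (θ.hom.app (R F j)).app j (Sum.inr (𝟙 j)) = Sum.inr (a F θ j) :=
      a_spec F θ j
    rw [hs]
    show Sum.map (F.map f) (fun h => h ≫ f) (Sum.inr (a F θ j)) = _
    simp
  have h2 : (θ.hom.app (R F j)).app j' (Sum.inr f)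
      = Sum.inr (f ≫ a F θ j') := by
    have := determination' F θ (R F j) j' (Sum.inr f)
    rw [this]
    show Sum.map (F.map (a F θ j')) (fun h => h ≫ a F θ j') (Sum.inr f) = _
    simp
  exact Sum.inr_injective (h1.symm.trans h2)

lemma a_comp_inv (θ : Aut (Under.forget F)) (j : J) :
    a F θ j ≫ a F θ.symm j = 𝟙 j := by
  have h := types_congr_hom (NatTrans.congr_app
      (NatTrans.congr_app θ.hom_inv_id (R F j)) j) (Sum.inr (𝟙 j))
  change (θ.inv.app (R F j)).app j ((θ.hom.app (R F j)).app j (Sum.inr (𝟙 j)))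
    = (Sum.inr (𝟙 j) : F.obj j ⊕ (j ⟶ j)) at h
  have hv : (θ.hom.app (R F j)).app j (Sum.inr (𝟙 j)) = Sum.inr (a F θ j) :=
    a_spec F θ j
  rw [hv] at h
  have h2 : (θ.inv.app (R F j)).app j (Sum.inr (a F θ j))
      = Sum.inr (a F θ j ≫ a F θ.symm j) := by
    have := determination' F θ.symm (R F j) j (Sum.inr (a F θ j))
    rw [show θ.inv = θ.symm.hom from rfl, this]
    show Sum.map (F.map (a F θ.symm j)) (fun h => h ≫ a F θ.symm j)
        (Sum.inr (a F θ j)) = _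
    simp
  rw [h2] at h
  exact Sum.inr_injective h

/-- The natural automorphism of the identity functor extracted from `θ`. -/
noncomputable def Ψ (θ : Aut (Under.forget F)) : Aut (𝟭 J) where
  hom := { app := a F θ
           naturality := fun j j' f => by
             simpa using (a_nat F θ f).symm }
  inv := { app := a F θ.symm
           naturality := fun j j' f => by
             simpa using (a_nat F θ.symm f).symm }
  hom_inv_id := by
    ext j
    simpa using a_comp_inv F θ j
  inv_hom_id := by
    ext j
    exact (a_comp_inv F θ.symm j : a F θ.symm j ≫ a F θ j = 𝟙 j)

/-- The natural transformation `G ⟶ G` induced by `α : 𝟭 J ⟶ 𝟭 J`. -/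
@[simps]
def mapHom (α : 𝟭 J ⟶ 𝟭 J) (G : J ⥤ Type u) : G ⟶ G where
  app j := G.map (α.app j)
  naturality j j' f := by
    ext x
    change G.map (α.app j') (G.map f x) = G.map f (G.map (α.app j) x)
    have h : f ≫ α.app j' = α.app j ≫ f := by simpa using α.naturality f
    calc G.map (α.app j') (G.map f x)
        = G.map (f ≫ α.app j') x := (FunctorToTypes.map_comp_apply G f (α.app j') x).symm
      _ = G.map (α.app j ≫ f) x := by rw [h]
      _ = G.map f (G.map (α.app j) x) := FunctorToTypes.map_comp_apply G (α.app j) f x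

/-- The automorphism of `Under.forget F` induced by `α : Aut (𝟭 J)`. -/
def Φ (α : Aut (𝟭 J)) : Aut (Under.forget F) where
  hom := { app := fun A => mapHom α.hom A.right
           naturality := fun A B k => by
             ext j x
             exact (types_congr_hom (k.right.naturality (α.hom.app j)) x).symm }
  inv := { app := fun A => mapHom α.inv A.right
           naturality := fun A B k => by
             ext j x
             exact (types_congr_hom (k.right.naturality (α.inv.app j)) x).symm }
  hom_inv_id := by
    ext A j x
    show A.right.map (α.inv.app j) (A.right.map (α.hom.app j) x) = x
    erw [← FunctorToTypes.map_comp_apply]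
    have : α.hom.app j ≫ α.inv.app j = 𝟙 j := by
      rw [← NatTrans.comp_app, α.hom_inv_id]; rfl
    rw [this]
    exact types_congr_hom (A.right.map_id j) x
  inv_hom_id := by
    ext A j x
    show A.right.map (α.hom.app j) (A.right.map (α.inv.app j) x) = x
    erw [← FunctorToTypes.map_comp_apply]
    have : α.inv.app j ≫ α.hom.app j = 𝟙 j := by
      rw [← NatTrans.comp_app, α.inv_hom_id]; rfl
    rw [this]
    exact types_congr_hom (A.right.map_id j) x

lemma left_inv (α : Aut (𝟭 J)) : Ψ F (Φ F α) = α := by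
  apply Iso.ext
  ext j
  have hv : θval F (Φ F α) j = Sum.inr (α.hom.app j) := by
    unfold θval
    show Sum.map (F.map (α.hom.app j)) (fun h => h ≫ α.hom.app j)
        (Sum.inr (𝟙 j)) = _
    simp
  have := (a_spec F (Φ F α) j).symm.trans hv
  exact Sum.inr_injective this

lemma right_inv (θ : Aut (Under.forget F)) : Φ F (Ψ F θ) = θ := by
  apply Iso.ext
  ext A j x
  exact (determination' F θ A j x).symm

end IsotropyAux

/-- For a small category `J` and a functor `F : J ⥤ Set`, the covariant isotropy group
`Z(F)` of `F` in the functor category `Set^J` — the group of natural automorphisms of the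
projection functor `F/(Set^J) ⥤ Set^J` — is isomorphic as a group to `Aut(Id_J)`, the
group of natural automorphisms of the identity functor on `J`. -/
theorem isotropy_of_presheaf_of_sets {J : Type u} [SmallCategory J] (F : J ⥤ Type u) :
    Nonempty (Aut (Under.forget F) ≃* Aut (𝟭 J)) := by
  refine ⟨(MulEquiv.mk' ⟨IsotropyAux.Φ F, IsotropyAux.Ψ F,
    IsotropyAux.left_inv F, IsotropyAux.right_inv F⟩ ?_).symm⟩
  intro α β
  apply Iso.ext
  ext A j x
  show A.right.map ((α * β).hom.app j) x = _
  rw [Aut.Aut_mul_def]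
  show A.right.map (β.hom.app j ≫ α.hom.app j) x = _
  erw [FunctorToTypes.map_comp_apply]
  rfl
end

section
/- Let G be a group and α : G ≅ G an automorphism of G. Then α is inner (i.e. there exists s ∈ G with α(g) = s·g·s⁻¹ for all g ∈ G) if and only if there exists a natural automorphism Π of the projection functor G/Grp → Grp (from the coslice category of G in the category of groups, sending a group homomorphism with domain G to its codomain) whose component at the object (G, id_G) equals α. -/
set_option linter.unusedSectionVars false
open Monoid CoprodI

structure Heis where
  a : ℤ
  b : ℤ
  c : ℤ

namespace Heis

def mul' (p q : Heis) : Heis := ⟨p.a + q.a, p.b + q.b, p.c + q.c + p.a * q.b⟩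
def inv' (p : Heis) : Heis := ⟨-p.a, -p.b, p.a * p.b - p.c⟩

instance : Group Heis where
  mul := mul'
  one := ⟨0, 0, 0⟩
  inv := inv'
  mul_assoc p q r := by
    show mul' (mul' p q) r = mul' p (mul' q r)
    simp only [mul', mk.injEq]; refine ⟨by ring, by ring, by ring⟩
  one_mul p := by
    show mul' ⟨0,0,0⟩ p = p
    cases p; simp only [mul', mk.injEq]; refine ⟨by ring, by ring, by ring⟩
  mul_one p := by
    show mul' p ⟨0,0,0⟩ = p
    cases p; simp only [mul', mk.injEq]; refine ⟨by ring, by ring, by ring⟩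
  inv_mul_cancel p := by
    show mul' (inv' p) p = ⟨0,0,0⟩
    cases p; simp only [mul', inv', mk.injEq]; refine ⟨by ring, by ring, by ring⟩

theorem mul_def (p q : Heis) : p * q = ⟨p.a + q.a, p.b + q.b, p.c + q.c + p.a * q.b⟩ := rfl
theorem one_def : (1 : Heis) = ⟨0,0,0⟩ := rfl

def hX : Multiplicative ℤ →* Heis where
  toFun n := ⟨2 * n.toAdd, 0, 0⟩
  map_one' := by simp [one_def]
  map_mul' p q := by rw [mul_def, Heis.mk.injEq]; refine ⟨by simp; ring, by simp, by simp⟩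

def hY : Multiplicative ℤ →* Heis where
  toFun n := ⟨0, 2 * n.toAdd, 0⟩
  map_one' := by simp [one_def]
  map_mul' p q := by rw [mul_def, Heis.mk.injEq]; refine ⟨by simp, by simp; ring, by simp⟩

def hXY : Multiplicative ℤ →* Heis where
  toFun n := ⟨2 * n.toAdd, 2 * n.toAdd, 2 * n.toAdd * n.toAdd + 2 * n.toAdd⟩
  map_one' := by simp [one_def]
  map_mul' p q := by rw [mul_def, Heis.mk.injEq]; refine ⟨by simp; ring, by simp; ring, by simp; ring⟩

end Heis

theorem zpow_eq_hom_apply {H : Type*} [Group H] (h : H) (f : Multiplicative ℤ →* H)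
    (hf : f (Multiplicative.ofAdd 1) = h) (e : ℤ) :
    h ^ e = f (Multiplicative.ofAdd e) := by
  have : zpowersHom H h = f := MonoidHom.ext_mint (by simpa using hf.symm)
  rw [← this]; rfl

theorem key_exponent (e : ℤ)
    (h : ((⟨2,0,0⟩ : Heis) * ⟨0,2,0⟩) ^ e = (⟨2,0,0⟩ : Heis) ^ e * (⟨0,2,0⟩ : Heis) ^ e) :
    e = 0 ∨ e = 1 := by
  rw [zpow_eq_hom_apply ((⟨2,0,0⟩ : Heis) * ⟨0,2,0⟩) Heis.hXY (by rw [Heis.mul_def]; simp [Heis.hXY]) e,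
      zpow_eq_hom_apply (⟨2,0,0⟩ : Heis) Heis.hX (by simp [Heis.hX]) e,
      zpow_eq_hom_apply (⟨0,2,0⟩ : Heis) Heis.hY (by simp [Heis.hY]) e,
      Heis.mul_def] at h
  simp only [Heis.hX, Heis.hY, Heis.hXY, MonoidHom.coe_mk, OneHom.coe_mk, Heis.mk.injEq,
    toAdd_ofAdd] at h
  obtain ⟨-, -, hc⟩ := h
  have : e * (e - 1) = 0 := by nlinarith
  rcases mul_eq_zero.mp this with h' | h'
  · left; exact h'
  · right; linarith



universe v

namespace Bergman

/-! ### word combinatorics setup -/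

universe w

section Words
variable {ι : Type w} {N : ι → Type v} [∀ i, Group (N i)]

def Pl (l : List (Σ i, N i)) : CoprodI N := (l.map fun p => CoprodI.of p.2).prod

def Ok (l : List (Σ i, N i)) : Prop :=
  (∀ p ∈ l, p.2 ≠ 1) ∧ l.Chain' (fun a b => a.1 ≠ b.1)

theorem Pl_nil : Pl ([] : List (Σ i, N i)) = 1 := rfl

theorem Pl_cons (p : Σ i, N i) (l : List (Σ i, N i)) :
    Pl (p :: l) = CoprodI.of p.2 * Pl l := by simp [Pl]

theorem Pl_append (l₁ l₂ : List (Σ i, N i)) : Pl (l₁ ++ l₂) = Pl l₁ * Pl l₂ := by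
  simp [Pl]

theorem Pl_singleton (p : Σ i, N i) : Pl [p] = CoprodI.of p.2 := by simp [Pl]

theorem list_eq {l l' : List (Σ i, N i)} (h : Ok l) (h' : Ok l') (hp : Pl l = Pl l') :
    l = l' := by
  classical
  have : (⟨l, h.1, h.2⟩ : Word N) = ⟨l', h'.1, h'.2⟩ :=
    (Word.equiv (M := N)).symm.injective hp
  exact congrArg Word.toList this

theorem exists_ok (c : CoprodI N) : ∃ l, Ok l ∧ Pl l = c := by
  classical
  exact ⟨(Word.equiv c).toList, ⟨(Word.equiv c).ne_one, (Word.equiv c).chain_ne⟩,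
    (Word.equiv (M := N)).symm_apply_apply c⟩

theorem getLast?_map' {α β} (f : α → β) (l : List α) :
    (l.map f).getLast? = l.getLast?.map f := by
  induction l with
  | nil => rfl
  | cons a t ih =>
    cases t with
    | nil => rfl
    | cons b t' => simpa using ih

theorem Ok.sub_left {l₁ l₂ : List (Σ i, N i)} (h : Ok (l₁ ++ l₂)) : Ok l₁ :=
  ⟨fun p hp => h.1 p (List.mem_append_left _ hp), h.2.left_of_append⟩

theorem Ok.sub_right {l₁ l₂ : List (Σ i, N i)} (h : Ok (l₁ ++ l₂)) : Ok l₂ :=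
  ⟨fun p hp => h.1 p (List.mem_append_right _ hp), h.2.right_of_append⟩

theorem Ok.tail {p : Σ i, N i} {l : List (Σ i, N i)} (h : Ok (p :: l)) : Ok l :=
  ⟨fun q hq => h.1 q (List.mem_cons_of_mem _ hq), h.2.tail⟩

/-- merging two reduced words with matching boundary syllables that do not cancel -/
theorem merge_len {L u v : List (Σ i, N i)} {i : ι} {a b : N i} (hOkL : Ok L)
    (hu : Ok (u ++ [⟨i, a⟩])) (hv : Ok (⟨i, b⟩ :: v)) (hab : a * b ≠ 1)
    (heq : Pl L = Pl (u ++ [⟨i, a⟩]) * Pl (⟨i, b⟩ :: v)) :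
    L.length = u.length + v.length + 1 := by
  have hOk : Ok (u ++ ⟨i, a * b⟩ :: v) := by
    constructor
    · intro p hp
      rcases List.mem_append.1 hp with hp | hp
      · exact hu.1 p (List.mem_append_left _ hp)
      · rcases List.mem_cons.1 hp with rfl | hp
        · exact hab
        · exact hv.1 p (List.mem_cons_of_mem _ hp)
    · refine List.isChain_append.2 ⟨hu.2.left_of_append, ?_, ?_⟩
      · exact List.isChain_cons.2 ⟨(List.isChain_cons.1 hv.2).1, (List.isChain_cons.1 hv.2).2⟩
      · intro x hx y hy
        simp only [List.head?_cons, Option.mem_def, Option.some.injEq] at hy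
        subst hy
        exact (List.isChain_append.1 hu.2).2.2 x hx ⟨i, a⟩ (by simp)
  have hL : L = u ++ ⟨i, a * b⟩ :: v := by
    refine list_eq hOkL hOk ?_
    rw [heq, Pl_append, Pl_append, Pl_cons, Pl_cons, Pl_cons, Pl_nil]
    have : (CoprodI.of (a * b) : CoprodI N) = CoprodI.of a * CoprodI.of b := map_mul _ _ _
    rw [this]
    group
  rw [hL]; simp [Nat.add_assoc]

theorem append_len {L u v : List (Σ i, N i)} (hOkL : Ok L)
    (hu : Ok u) (hv : Ok v)
    (hj : ∀ x ∈ u.getLast?, ∀ y ∈ v.head?, x.1 ≠ y.1)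
    (heq : Pl L = Pl u * Pl v) :
    L.length = u.length + v.length := by
  have hOk : Ok (u ++ v) := by
    constructor
    · intro p hp
      rcases List.mem_append.1 hp with hp | hp
      exacts [hu.1 p hp, hv.1 p hp]
    · exact List.isChain_append.2 ⟨hu.2, hv.2, hj⟩
  have hL : L = u ++ v := list_eq hOkL hOk (by rw [heq, Pl_append])
  rw [hL]; simp

end Words

end Bergman





namespace Bergman2

/-! ### The two coproducts -/

abbrev F2 : Type u := FreeGroup (ULift.{u} Bool)

def Xg : F2.{u} := FreeGroup.of ⟨true⟩
def Yg : F2.{u} := FreeGroup.of ⟨false⟩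

variable (G : Type u) [Group G]

def M1 : Bool → Type u
  | false => G
  | true => ULift.{u} (Multiplicative ℤ)

instance : ∀ b, Group (M1 G b)
  | false => inferInstanceAs (Group G)
  | true => inferInstanceAs (Group (ULift (Multiplicative ℤ)))

def M2 : Bool → Type u
  | false => G
  | true => F2.{u}

instance : ∀ b, Group (M2 G b)
  | false => inferInstanceAs (Group G)
  | true => inferInstanceAs (Group F2)

abbrev A1 := CoprodI (M1 G)
abbrev A2 := CoprodI (M2 G)

abbrev inG : G →* A1 G := CoprodI.of (M := M1 G) (i := false)
abbrev inZ : ULift.{u} (Multiplicative ℤ) →* A1 G := CoprodI.of (M := M1 G) (i := true)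
abbrev inG2 : G →* A2 G := CoprodI.of (M := M2 G) (i := false)
abbrev inF : F2.{u} →* A2 G := CoprodI.of (M := M2 G) (i := true)

abbrev x1 : A1 G := inZ G ⟨Multiplicative.ofAdd 1⟩

/-- substitution `x ↦ w^·` -/
def psi (w : F2.{u}) : ULift.{u} (Multiplicative ℤ) →* F2.{u} :=
  (zpowersHom F2 w).comp (MulEquiv.ulift.toMonoidHom)

theorem psi_apply (w : F2.{u}) (e : ULift.{u} (Multiplicative ℤ)) :
    psi w e = w ^ e.down.toAdd := rfl

def Jh (w : F2.{u}) : A1 G →* A2 G :=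
  CoprodI.lift fun b => match b with
    | false => (CoprodI.of (M := M2 G) (i := false) : G →* A2 G)
    | true => (CoprodI.of (M := M2 G) (i := true) : F2 →* A2 G).comp (psi w)

theorem Jh_inG (w : F2.{u}) (a : G) : Jh G w (inG G a) = inG2 G a :=
  CoprodI.lift_of (M := M1 G) _ (i := false) a

theorem Jh_inZ (w : F2.{u}) (e : ULift.{u} (Multiplicative ℤ)) :
    Jh G w (inZ G e) = inF G (psi w e) :=
  CoprodI.lift_of (M := M1 G) _ (i := true) e

end Bergman2


namespace Bergman2
open Bergman
variable (G : Type u) [Group G]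

/-- syllable-wise substitution on reduced words -/
def phi (w : F2.{u}) : (Σ b, M1 G b) → (Σ b, M2 G b)
  | ⟨false, a⟩ => ⟨false, a⟩
  | ⟨true, e⟩ => ⟨true, psi w e⟩

theorem phi_fst (w : F2.{u}) (p : Σ b, M1 G b) : (phi G w p).1 = p.1 := by
  rcases p with ⟨b, m⟩; cases b <;> rfl

theorem Pl_map_phi (w : F2.{u}) (l : List (Σ b, M1 G b)) :
    Pl (l.map (phi G w)) = Jh G w (Pl l) := by
  induction l with
  | nil => simp [Pl_nil]
  | cons p t ih =>
    rw [List.map_cons, Pl_cons, Pl_cons, map_mul, ih]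
    congr 1
    rcases p with ⟨b, m⟩
    cases b
    · exact (Jh_inG G w m).symm
    · exact (Jh_inZ G w m).symm

theorem ok_map (w : F2.{u}) (hw : ∀ e, e ≠ (1 : ULift.{u} (Multiplicative ℤ)) → psi w e ≠ 1)
    {l : List (Σ b, M1 G b)} (h : Ok l) : Ok (l.map (phi G w)) := by
  constructor
  · intro p hp
    rcases List.mem_map.1 hp with ⟨q, hq, rfl⟩
    have hq1 := h.1 q hq
    rcases q with ⟨b, m⟩
    cases b
    · exact hq1
    · exact hw m hq1
  · refine List.isChain_map_of_isChain _ ?_ h.2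
    intro a b hab
    rw [phi_fst, phi_fst]
    exact hab

/-! ### degree homomorphisms on `F2` -/

def degX : F2.{u} →* Multiplicative ℤ :=
  FreeGroup.lift fun b => if b.down then Multiplicative.ofAdd (1 : ℤ) else 1

def degY : F2.{u} →* Multiplicative ℤ :=
  FreeGroup.lift fun b => if b.down then 1 else Multiplicative.ofAdd (1 : ℤ)

theorem degX_Xg : degX Xg = Multiplicative.ofAdd (1 : ℤ) := by
  simp [degX, Xg, FreeGroup.lift_apply_of]

theorem degX_Yg : degX Yg = 1 := by simp [degX, Yg, FreeGroup.lift_apply_of]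
theorem degY_Yg : degY Yg = Multiplicative.ofAdd (1 : ℤ) := by simp [degY, Yg, FreeGroup.lift_apply_of]
theorem degX_XY : degX (Xg * Yg) = Multiplicative.ofAdd (1 : ℤ) := by
  rw [map_mul, degX_Xg, degX_Yg, mul_one]

theorem ofAdd_one_zpow (n : ℤ) :
    (Multiplicative.ofAdd (1 : ℤ)) ^ n = Multiplicative.ofAdd n := by
  rw [← ofAdd_zsmul]; simp

theorem ulift_one_of (e : ULift.{u} (Multiplicative ℤ)) (h : e.down.toAdd = 0) : e = 1 := by
  cases e with
  | up d =>
    have hd : d = 1 := by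
      have := congrArg Multiplicative.ofAdd h
      simpa using this
    subst hd; rfl

theorem psi_ne_one (w : F2.{u}) (d : F2.{u} →* Multiplicative ℤ)
    (hw : d w = Multiplicative.ofAdd 1) :
    ∀ e, e ≠ (1 : ULift.{u} (Multiplicative ℤ)) → psi w e ≠ 1 := by
  intro e he h
  apply he
  have h2 : d (psi w e) = Multiplicative.ofAdd e.down.toAdd := by
    rw [psi_apply, map_zpow, hw, ofAdd_one_zpow]
  rw [h, map_one] at h2
  exact ulift_one_of e (by simpa using h2.symm)

theorem psiX_ne : ∀ e, e ≠ (1 : ULift.{u} (Multiplicative ℤ)) → psi Xg e ≠ 1 :=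
  psi_ne_one Xg degX degX_Xg

theorem psiY_ne : ∀ e, e ≠ (1 : ULift.{u} (Multiplicative ℤ)) → psi Yg e ≠ 1 :=
  psi_ne_one Yg degY degY_Yg

theorem psiXY_ne : ∀ e, e ≠ (1 : ULift.{u} (Multiplicative ℤ)) → psi (Xg * Yg) e ≠ 1 :=
  psi_ne_one (Xg * Yg) degX degX_XY

theorem merge_ne (e e' : ULift.{u} (Multiplicative ℤ)) (he : e ≠ 1) :
    psi Xg e * psi Yg e' ≠ 1 := by
  intro h
  apply he
  have h2 : degX (psi Xg e * psi Yg e') = Multiplicative.ofAdd e.down.toAdd := by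
    rw [map_mul, psi_apply, psi_apply, map_zpow, map_zpow, degX_Xg, degX_Yg, one_zpow, mul_one,
      ofAdd_one_zpow]
  rw [h, map_one] at h2
  exact ulift_one_of e (by simpa using h2.symm)

/-- the exponent is pinned down by the Heisenberg group -/
theorem exp_eq (e : ULift.{u} (Multiplicative ℤ))
    (h : psi (Xg * Yg) e = psi Xg e * psi Yg e) :
    e = 1 ∨ e = ⟨Multiplicative.ofAdd 1⟩ := by
  have hH : ((⟨2,0,0⟩ : Heis) * ⟨0,2,0⟩) ^ e.down.toAdd
      = (⟨2,0,0⟩ : Heis) ^ e.down.toAdd * (⟨0,2,0⟩ : Heis) ^ e.down.toAdd := by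
    have hc := congrArg (FreeGroup.lift fun b : ULift.{u} Bool =>
      if b.down then (⟨2,0,0⟩ : Heis) else ⟨0,2,0⟩) h
    rw [psi_apply, psi_apply, psi_apply, map_mul, map_zpow, map_zpow, map_zpow] at hc
    simpa [Xg, Yg, FreeGroup.lift_apply_of, map_mul] using hc
  rcases key_exponent e.down.toAdd hH with h0 | h1
  · exact Or.inl (ulift_one_of e h0)
  · right
    cases e with
    | up d =>
      have hd : d = Multiplicative.ofAdd 1 := by
        have := congrArg Multiplicative.ofAdd h1
        simpa using this
      subst hd; rfl

end Bergman2


namespace Bergman2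
open Bergman
variable {G : Type u} [Group G]

theorem core (n : ℕ) :
    ∀ l : List (Σ b, M1 G b), l.length = n → Ok l →
      Jh G (Xg * Yg) (Pl l) = Jh G Xg (Pl l) * Jh G Yg (Pl l) →
      Pl l = 1 ∨ ∃ a : G, Pl l = inG G a * x1 G * (inG G a)⁻¹ := by
  induction n using Nat.strong_induction_on with
  | _ n IH =>
    intro l hlen hok hE
    rcases l with _ | ⟨p, t⟩
    · exact Or.inl rfl
    rcases List.eq_nil_or_concat' t with rfl | ⟨t', q, rfl⟩
    · -- singleton
      rcases p with ⟨(_|_), pm⟩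
      · -- single G-syllable
        change G at pm
        left
        have PlG : Pl [(⟨false, pm⟩ : Σ b, M1 G b)] = inG G pm := by rw [Pl_singleton]; rfl
        rw [PlG, Jh_inG, Jh_inG, Jh_inG] at hE
        have h2 : inG2 G pm = inG2 G 1 := by
          rw [map_one]
          exact (mul_left_cancel (a := inG2 G pm) (by rw [mul_one]; exact hE)).symm
        have h1 : pm = 1 := CoprodI.of_injective (M := M2 G) false h2
        rw [PlG, h1, map_one]
      · -- single ℤ-syllable
        change ULift.{u} (Multiplicative ℤ) at pm
        have PlZ : Pl [(⟨true, pm⟩ : Σ b, M1 G b)] = inZ G pm := by rw [Pl_singleton]; rfl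
        rw [PlZ, Jh_inZ, Jh_inZ, Jh_inZ, ← map_mul] at hE
        have hpsi : psi (Xg * Yg) pm = psi Xg pm * psi Yg pm :=
          CoprodI.of_injective (M := M2 G) true hE
        rcases exp_eq pm hpsi with h1 | h1
        · left; rw [PlZ, h1]; exact map_one (inZ G)
        · right
          refine ⟨1, ?_⟩
          rw [PlZ, h1]
          rw [show (inG G) (1 : G) = 1 from map_one (inG G), one_mul, inv_one, mul_one]
    · -- at least two syllables
      have hE' : Pl ((p :: (t' ++ [q])).map (phi G (Xg * Yg)))
          = Pl ((p :: (t' ++ [q])).map (phi G Xg)) * Pl ((p :: (t' ++ [q])).map (phi G Yg)) := by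
        rw [Pl_map_phi, Pl_map_phi, Pl_map_phi]; exact hE
      have okL : Ok ((p :: (t' ++ [q])).map (phi G (Xg * Yg))) := ok_map G _ psiXY_ne hok
      have ok1 : Ok ((p :: (t' ++ [q])).map (phi G Xg)) := ok_map G _ psiX_ne hok
      have ok2 : Ok ((p :: (t' ++ [q])).map (phi G Yg)) := ok_map G _ psiY_ne hok
      rcases p with ⟨(_|_), pm⟩ <;> rcases q with ⟨(_|_), qm⟩
      · -- (G, G)
        change G at pm qm
        by_cases hc : qm * pm = 1
        · -- cancellation: recurse
          have hqp : qm = pm⁻¹ := eq_inv_of_mul_eq_one_left hc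
          have hPl : Pl ((⟨false, pm⟩ : Σ b, M1 G b) :: (t' ++ [⟨false, qm⟩]))
              = inG G pm * (Pl t' * inG G qm) := by
            rw [Pl_cons, Pl_append, Pl_singleton]; rfl
          have key : ∀ w : F2.{u}, Jh G w (Pl ((⟨false, pm⟩ : Σ b, M1 G b) :: (t' ++ [⟨false, qm⟩])))
              = inG2 G pm * (Jh G w (Pl t') * inG2 G qm) := by
            intro w
            rw [hPl, map_mul, map_mul, Jh_inG, Jh_inG]
          rw [key, key, key] at hE
          have cancel : inG2 G qm * inG2 G pm = 1 := by rw [← map_mul, hc, map_one]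
          have h4 : Jh G (Xg * Yg) (Pl t') * inG2 G qm
              = (Jh G Xg (Pl t') * inG2 G qm) * (inG2 G pm * (Jh G Yg (Pl t') * inG2 G qm)) :=
            mul_left_cancel (hE.trans (mul_assoc _ _ _))
          have h5 : (Jh G Xg (Pl t') * inG2 G qm) * (inG2 G pm * (Jh G Yg (Pl t') * inG2 G qm))
              = (Jh G Xg (Pl t') * Jh G Yg (Pl t')) * inG2 G qm := by
            rw [mul_assoc (Jh G Xg (Pl t')) (inG2 G qm) _, ← mul_assoc (inG2 G qm) (inG2 G pm) _,
              cancel, one_mul, ← mul_assoc]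
          have hE2 : Jh G (Xg * Yg) (Pl t') = Jh G Xg (Pl t') * Jh G Yg (Pl t') :=
            mul_right_cancel (h4.trans h5)
          have hlt : t'.length < n := by
            simp only [List.length_cons, List.length_append, List.length_singleton] at hlen
            omega
          have okt : Ok t' := (hok.tail).sub_left
          rcases IH t'.length hlt t' rfl okt hE2 with h6 | ⟨a, ha⟩
          · left
            rw [hPl, h6, one_mul, hqp, ← map_mul, mul_inv_cancel, map_one]
          · right
            refine ⟨(show G from pm) * a, ?_⟩
            rw [hPl, ha, hqp, map_mul, map_inv, mul_inv_rev]
            group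
        · -- no cancellation: merge yields impossible lengths
          exfalso
          have h1 : ((⟨false, pm⟩ : Σ b, M1 G b) :: (t' ++ [⟨false, qm⟩])).map (phi G Xg)
              = ((⟨false, pm⟩ : Σ b, M1 G b) :: t').map (phi G Xg)
                ++ [(⟨false, qm⟩ : Σ b, M2 G b)] := by simp [phi]
          have h2 : ((⟨false, pm⟩ : Σ b, M1 G b) :: (t' ++ [⟨false, qm⟩])).map (phi G Yg)
              = (⟨false, pm⟩ : Σ b, M2 G b)
                :: List.map (phi G Yg) (t' ++ [(⟨false, qm⟩ : Σ b, M1 G b)]) := by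
            simp [phi]
          rw [h1] at ok1 hE'
          rw [h2] at ok2 hE'
          have hlen3 := merge_len (N := M2 G) (i := false) (a := qm) (b := pm) okL ok1 ok2 hc hE'
          simp only [List.length_map, List.length_cons, List.length_append,
            List.length_singleton] at hlen3
          omega
      · -- (G, ℤ) : mixed ends
        exfalso
        have hj : ∀ x ∈ ((((⟨false, pm⟩ : Σ b, M1 G b) :: (t' ++ [⟨true, qm⟩])).map (phi G Xg))).getLast?,
            ∀ y ∈ ((((⟨false, pm⟩ : Σ b, M1 G b) :: (t' ++ [⟨true, qm⟩])).map (phi G Yg))).head?, x.1 ≠ y.1 := by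
          intro x hx y hy
          rw [getLast?_map'] at hx
          have hLast : ((⟨false, pm⟩ : Σ b, M1 G b) :: (t' ++ [⟨true, qm⟩])).getLast? = some ⟨true, qm⟩ := by
            rw [show ((⟨false, pm⟩ : Σ b, M1 G b) :: (t' ++ [⟨true, qm⟩]))
              = ((⟨false, pm⟩ :: t') ++ [⟨true, qm⟩]) from by simp, List.getLast?_concat]
          rw [hLast] at hx
          simp only [Option.map_some, Option.mem_def, Option.some.injEq] at hx
          simp only [List.map_cons, List.head?_cons, Option.mem_def, Option.some.injEq] at hy
          subst hx; subst hy
          simp [phi]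
        have hlen3 := append_len okL ok1 ok2 hj hE'
        simp only [List.length_map, List.length_cons, List.length_append,
          List.length_singleton] at hlen3
        omega
      · -- (ℤ, G) : mixed ends
        exfalso
        have hj : ∀ x ∈ ((((⟨true, pm⟩ : Σ b, M1 G b) :: (t' ++ [⟨false, qm⟩])).map (phi G Xg))).getLast?,
            ∀ y ∈ ((((⟨true, pm⟩ : Σ b, M1 G b) :: (t' ++ [⟨false, qm⟩])).map (phi G Yg))).head?, x.1 ≠ y.1 := by
          intro x hx y hy
          rw [getLast?_map'] at hx
          have hLast : ((⟨true, pm⟩ : Σ b, M1 G b) :: (t' ++ [⟨false, qm⟩])).getLast? = some ⟨false, qm⟩ := by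
            rw [show ((⟨true, pm⟩ : Σ b, M1 G b) :: (t' ++ [⟨false, qm⟩]))
              = ((⟨true, pm⟩ :: t') ++ [⟨false, qm⟩]) from by simp, List.getLast?_concat]
          rw [hLast] at hx
          simp only [Option.map_some, Option.mem_def, Option.some.injEq] at hx
          simp only [List.map_cons, List.head?_cons, Option.mem_def, Option.some.injEq] at hy
          subst hx; subst hy
          simp [phi]
        have hlen3 := append_len okL ok1 ok2 hj hE'
        simp only [List.length_map, List.length_cons, List.length_append,
          List.length_singleton] at hlen3
        omega
      · -- (ℤ, ℤ) : merge of two ℤ-syllables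
        exfalso
        have hqm1 : qm ≠ 1 := hok.1 ⟨true, qm⟩ (by simp)
        have h1 : ((⟨true, pm⟩ : Σ b, M1 G b) :: (t' ++ [⟨true, qm⟩])).map (phi G Xg)
            = ((⟨true, pm⟩ : Σ b, M1 G b) :: t').map (phi G Xg)
              ++ [(⟨true, psi Xg qm⟩ : Σ b, M2 G b)] := by simp [phi]
        have h2 : ((⟨true, pm⟩ : Σ b, M1 G b) :: (t' ++ [⟨true, qm⟩])).map (phi G Yg)
            = (⟨true, psi Yg pm⟩ : Σ b, M2 G b)
              :: List.map (phi G Yg) (t' ++ [(⟨true, qm⟩ : Σ b, M1 G b)]) := by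
          simp [phi]
        rw [h1] at ok1 hE'
        rw [h2] at ok2 hE'
        have hlen3 := merge_len (N := M2 G) (i := true) (a := psi Xg qm) (b := psi Yg pm) okL
          ok1 ok2 (merge_ne qm pm hqm1) hE'
        simp only [List.length_map, List.length_cons, List.length_append,
          List.length_singleton] at hlen3
        omega

end Bergman2

/-! ### Main theorem -/

open CategoryTheory Bergman Bergman2

namespace Bergman2

variable {G : Type u} [Group G]

theorem classify (c : A1 G)
    (hE : Jh G (Xg * Yg) c = Jh G Xg c * Jh G Yg c) :
    c = 1 ∨ ∃ a : G, c = inG G a * x1 G * (inG G a)⁻¹ := by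
  obtain ⟨l, hok, rfl⟩ := exists_ok c
  exact core l.length l rfl hok hE

/-- evaluation homomorphism sending the free generator to `g` -/
def pHom (g : G) : A1 G →* G :=
  CoprodI.lift fun b => match b with
    | false => MonoidHom.id G
    | true => (zpowersHom G g).comp (MulEquiv.ulift.toMonoidHom)

theorem pHom_inG (g : G) (a : G) : pHom g (inG G a) = a :=
  CoprodI.lift_of (M := M1 G) _ (i := false) a

theorem pHom_x1 (g : G) : pHom g (x1 G) = g := by
  have : pHom g (x1 G) = (zpowersHom G g).comp (MulEquiv.ulift.toMonoidHom)
      (⟨Multiplicative.ofAdd 1⟩ : ULift.{u} (Multiplicative ℤ)) :=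
    CoprodI.lift_of (M := M1 G) _ (i := true) _
  rw [this]
  show g ^ (1 : ℤ) = g
  exact zpow_one g

theorem Jh_x1 (w : F2.{u}) : Jh G w (x1 G) = inF G w := by
  rw [show (x1 G : A1 G) = inZ G ⟨Multiplicative.ofAdd 1⟩ from rfl, Jh_inZ]
  congr 1
  rw [psi_apply]
  simp

end Bergman2

theorem inner_of_natural (G : GrpCat.{u}) (α : G ≅ G)
    (P : Aut (Under.forget G)) (hP : P.app (Under.mk (𝟙 G)) = α) :
    ∃ s : G, ∀ g : G, α.hom g = s * g * s⁻¹ := by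
  let A1c : GrpCat.{u} := GrpCat.of (A1 ↑G)
  let A2c : GrpCat.{u} := GrpCat.of (A2 ↑G)
  let obj1 : Under G := Under.mk (show G ⟶ A1c from GrpCat.ofHom (inG ↑G))
  let obj2 : Under G := Under.mk (show G ⟶ A2c from GrpCat.ofHom (inG2 ↑G))
  let c : A1 ↑G := P.hom.app obj1 (x1 ↑G)
  -- substitution morphisms in the under category
  have jw : ∀ w : F2.{u}, (show G ⟶ A1c from GrpCat.ofHom (inG ↑G)) ≫
      (show A1c ⟶ A2c from GrpCat.ofHom (Jh ↑G w)) = (show G ⟶ A2c from GrpCat.ofHom (inG2 ↑G)) := by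
    intro w
    ext a
    exact Jh_inG ↑G w a
  have hnat : ∀ w : F2.{u}, P.hom.app obj2 (Jh ↑G w (x1 ↑G)) = Jh ↑G w c := by
    intro w
    have h := P.hom.naturality (Under.homMk (U := obj1) (V := obj2)
      (show A1c ⟶ A2c from GrpCat.ofHom (Jh ↑G w)) (jw w))
    have h2 := congrArg (fun (m : A1c ⟶ A2c) => m (x1 ↑G)) h
    exact h2
  have hE : Jh ↑G (Xg * Yg) c = Jh ↑G Xg c * Jh ↑G Yg c := by
    have h3 := hnat (Xg * Yg); have h1 := hnat Xg; have h2 := hnat Yg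
    rw [Jh_x1] at h1 h2 h3
    let β2 : A2 ↑G →* A2 ↑G := (P.hom.app obj2).hom
    have h1' : β2 (inF ↑G Xg) = Jh ↑G Xg c := h1
    have h2' : β2 (inF ↑G Yg) = Jh ↑G Yg c := h2
    have h3' : β2 (inF ↑G (Xg * Yg)) = Jh ↑G (Xg * Yg) c := h3
    rw [← h1', ← h2', ← h3', ← map_mul β2, ← map_mul (inF ↑G)]
  -- evaluation morphisms
  have pw : ∀ g : ↑G, (show G ⟶ A1c from GrpCat.ofHom (inG ↑G)) ≫
      (show A1c ⟶ G from GrpCat.ofHom (pHom g)) = 𝟙 G := by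
    intro g
    ext a
    exact pHom_inG g a
  have halpha : ∀ g : ↑G, α.hom g = pHom g c := by
    intro g
    have h := P.hom.naturality (Under.homMk (U := obj1) (V := Under.mk (𝟙 G))
      (show A1c ⟶ G from GrpCat.ofHom (pHom g)) (pw g))
    have h2 := congrArg (fun (m : A1c ⟶ G) => m (x1 ↑G)) h
    have h3 : P.hom.app (Under.mk (𝟙 G)) (pHom g (x1 ↑G)) = pHom g c := h2
    rw [pHom_x1] at h3
    have h4 : P.hom.app (Under.mk (𝟙 G)) = α.hom := congrArg Iso.hom hP
    rw [h4] at h3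
    exact h3
  rcases Bergman2.classify c hE with hc | ⟨a, hc⟩
  · refine ⟨1, fun g => ?_⟩
    have h1 : α.hom g = 1 := by rw [halpha, hc, map_one]
    have hg : g = 1 := by
      have h5 := congrArg (fun (m : G ⟶ G) => m g) α.hom_inv_id
      have h6 : α.inv.hom (α.hom g) = g := h5
      rw [h1, map_one] at h6
      exact h6.symm
    rw [h1, hg]
    simp
  · refine ⟨a, fun g => ?_⟩
    rw [halpha g, hc, map_mul, map_mul, map_inv, pHom_inG, pHom_x1]

/-- Bergman's theorem: an automorphism `α : G ≅ G` of a group `G` is inner (for some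
`s ∈ G`, `α(g) = s·g·s⁻¹` for all `g`) iff there exists a natural automorphism of the
projection functor `G/Grp ⥤ Grp` whose component at the object `(G, id_G)` equals `α`. -/
theorem inner_iff_categorical_inner (G : GrpCat.{u}) (α : G ≅ G) :
    (∃ s : G, ∀ g : G, α.hom g = s * g * s⁻¹) ↔
      ∃ P : Aut (Under.forget G), P.app (Under.mk (𝟙 G)) = α := by
  constructor
  · rintro ⟨s, hs⟩
    refine ⟨NatIso.ofComponents (fun X => MulEquiv.toGrpIso (MulAut.conj (X.hom s))) ?_, ?_⟩
    · intro X Y u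
      have hw : ∀ z : G, u.right (X.hom z) = Y.hom z := fun z =>
        congrArg (fun (m : G ⟶ Y.right) => m z) (Under.w u)
      ext g
      change ↑X.right at g
      change (MulAut.conj (Y.hom s)) (u.right g) = u.right ((MulAut.conj (X.hom s)) g)
      simp only [MulAut.conj_apply]
      rw [map_mul, map_mul, map_inv, hw s]
    · apply Iso.ext
      ext g
      change s * (show ↑G from g) * s⁻¹ = α.hom (show ↑G from g)
      exact (hs (show ↑G from g)).symm
  · rintro ⟨P, hP⟩
    exact inner_of_natural G α P hP
end

section
/- Let J be a small discrete category (a category with no non-identity morphisms, i.e. the discrete category on a type of objects) and F : J ⥤ Grp a functor, i.e. an ob(J)-indexed family of groups (F(i))_i. Then the covariant isotropy group Z(F) of F in the functor category Grp^J is isomorphic as a group to the product group ∏_{i ∈ ob J} Z(F(i)) of the covariant isotropy groups of the component groups. -/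
open CategoryTheory

universe u

namespace IsotropyDiscreteAux

variable {ι : Type u} (F : Discrete ι ⥤ GrpCat.{u})

attribute [local instance] Classical.propDecidable

noncomputable def fn (i : ι) (u : Under (F.obj ⟨i⟩)) (j : ι) : GrpCat.{u} :=
  if _ : j = i then u.right else F.obj ⟨j⟩

lemma fn_pos {i : ι} (u : Under (F.obj ⟨i⟩)) {j : ι} (h : j = i) :
    fn F i u j = u.right := dif_pos h

lemma fn_neg {i : ι} (u : Under (F.obj ⟨i⟩)) {j : ι} (h : ¬ j = i) :
    fn F i u j = F.obj ⟨j⟩ := dif_neg h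

/-- Extend an object of `Under (F.obj ⟨i⟩)` to an object of `Under F`, replacing the
`i`-th component by `u` and keeping all other components. -/
@[reducible] noncomputable def extObj (i : ι) (u : Under (F.obj ⟨i⟩)) : Under F :=
  Under.mk (Y := Discrete.functor (fn F i u))
    (Discrete.natTrans fun j =>
      if h : j.as = i then
        eqToHom (by cases j; cases h; rfl) ≫ u.hom ≫ eqToHom (fn_pos F u h).symm
      else eqToHom (by cases j; exact (fn_neg F u h).symm))

@[simp] lemma extObj_hom_app (i : ι) (u : Under (F.obj ⟨i⟩)) (j : Discrete ι) :
    (extObj F i u).hom.app j =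
      if h : j.as = i then
        eqToHom (by cases j; cases h; rfl) ≫ u.hom ≫ eqToHom (fn_pos F u h).symm
      else eqToHom (by cases j; exact (fn_neg F u h).symm) := rfl

lemma extObj_right_i (i : ι) (u : Under (F.obj ⟨i⟩)) :
    (extObj F i u).right.obj ⟨i⟩ = u.right := fn_pos F u rfl

/-- The restriction at `i` of `extObj F i u` is isomorphic to `u`. -/
noncomputable def restrIso (i : ι) (u : Under (F.obj ⟨i⟩)) :
    Under.mk ((extObj F i u).hom.app ⟨i⟩) ≅ u :=
  Under.isoMk (eqToIso (extObj_right_i F i u)) (by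
    simp)

end IsotropyDiscreteAux

namespace IsotropyDiscreteAux

variable {ι : Type u} (F : Discrete ι ⥤ GrpCat.{u})

attribute [local instance] Classical.propDecidable

/-- `extObj` is functorial. -/
noncomputable def extMap (i : ι) {u v : Under (F.obj ⟨i⟩)} (m : u ⟶ v) :
    extObj F i u ⟶ extObj F i v :=
  Under.homMk (Discrete.natTrans fun j =>
    if h : j.as = i then
      eqToHom (fn_pos F u h) ≫ m.right ≫ eqToHom (fn_pos F v h).symm
    else eqToHom ((fn_neg F u h).trans (fn_neg F v h).symm))
    (by
      ext j : 2
      by_cases h : j.as = i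
      · obtain ⟨j⟩ := j; cases h
        simp [Under.w m]
      · simp [h])

/-- The canonical map from the extension of the `i`-th restriction of `w` back to `w`. -/
noncomputable def proj (w : Under F) (i : ι) :
    extObj F i (Under.mk (w.hom.app ⟨i⟩)) ⟶ w :=
  Under.homMk (Discrete.natTrans fun j =>
    if h : j.as = i then
      eqToHom ((fn_pos F _ h).trans (by cases j; cases h; rfl))
    else eqToHom (fn_neg F _ h) ≫ w.hom.app j)
    (by
      ext j : 2
      by_cases h : j.as = i
      · obtain ⟨j⟩ := j; cases h
        simp
      · simp [h])

@[simp] lemma proj_right_app_i (w : Under F) (i : ι) :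
    (proj F w i).right.app ⟨i⟩ = eqToHom (extObj_right_i F i (Under.mk (w.hom.app ⟨i⟩))) := by
  simp [proj]

end IsotropyDiscreteAux

namespace IsotropyDiscreteAux

variable {ι : Type u} (F : Discrete ι ⥤ GrpCat.{u})

attribute [local instance] Classical.propDecidable

/-- Assemble a family of isotropy elements into an isotropy element of the diagram. -/
noncomputable def phiFun (β : ∀ i : ι, Aut (Under.forget (F.obj ⟨i⟩))) :
    Aut (Under.forget F) :=
  NatIso.ofComponents
    (fun u => NatIso.ofComponents
      (fun j => (β j.as).app (Under.mk (u.hom.app ⟨j.as⟩)))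
      (by
        rintro ⟨j⟩ ⟨j'⟩ f
        obtain rfl : j = j' := Discrete.eq_of_hom f
        rw [Subsingleton.elim f (𝟙 _)]
        simp))
    (by
      intro u v m
      apply NatTrans.ext
      funext ⟨j⟩
      exact ((β j).hom.naturality
        (show Under.mk (u.hom.app ⟨j⟩) ⟶ Under.mk (v.hom.app ⟨j⟩) from
          Under.homMk (m.right.app ⟨j⟩)
            (by exact NatTrans.congr_app (Under.w m) ⟨j⟩))))

@[simp] lemma phiFun_hom_app_app (β : ∀ i : ι, Aut (Under.forget (F.obj ⟨i⟩)))
    (u : Under F) (j : Discrete ι) :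
    ((phiFun F β).hom.app u).app j = (β j.as).hom.app (Under.mk (u.hom.app ⟨j.as⟩)) := rfl

noncomputable def phi : (∀ i : ι, Aut (Under.forget (F.obj ⟨i⟩))) →* Aut (Under.forget F) where
  toFun := phiFun F
  map_one' := by
    ext u ⟨j⟩
    simp [phiFun]
    rfl
  map_mul' β β' := by
    ext u ⟨j⟩
    simp [phiFun]
    rfl

end IsotropyDiscreteAux

namespace IsotropyDiscreteAux

variable {ι : Type u} (F : Discrete ι ⥤ GrpCat.{u})

attribute [local instance] Classical.propDecidable

lemma phi_injective : Function.Injective (phi F) := by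
  intro β β' h
  funext i
  apply Iso.ext
  apply NatTrans.ext
  funext u
  have h1 : (β i).hom.app (Under.mk ((extObj F i u).hom.app ⟨i⟩)) =
      (β' i).hom.app (Under.mk ((extObj F i u).hom.app ⟨i⟩)) := by
    have := congrArg (fun α : Aut (Under.forget F) => (α.hom.app (extObj F i u)).app ⟨i⟩) h
    simpa [phi] using this
  set e := restrIso F i u with he
  have h2 := (β i).hom.naturality e.hom
  have h2' := (β' i).hom.naturality e.hom
  have key : (Under.forget (F.obj ⟨i⟩)).map e.hom ≫ (β i).hom.app u =
      (Under.forget (F.obj ⟨i⟩)).map e.hom ≫ (β' i).hom.app u := by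
    rw [h2, h2', h1]
  exact (cancel_epi _).mp key

lemma phi_surjective : Function.Surjective (phi F) := by
  intro α
  refine ⟨fun i => NatIso.ofComponents
    (fun u => eqToIso (extObj_right_i F i u).symm ≪≫
      (α.app (extObj F i u)).app ⟨i⟩ ≪≫ eqToIso (extObj_right_i F i u)) ?_, ?_⟩
  · intro u v m
    have h := NatTrans.congr_app (α.hom.naturality (extMap F i m)) ⟨i⟩
    rw [NatTrans.comp_app, NatTrans.comp_app] at h
    simp [extMap] at h ⊢
    rw [← cancel_epi (eqToHom (extObj_right_i F i u)),
      ← cancel_mono (eqToHom (extObj_right_i F i v).symm)]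
    simp only [Category.assoc, eqToHom_trans, eqToHom_refl, Category.comp_id,
      Category.id_comp, eqToHom_trans_assoc]
    exact h
  · apply Iso.ext
    apply NatTrans.ext
    funext w
    apply NatTrans.ext
    funext ⟨j⟩
    have h := NatTrans.congr_app (α.hom.naturality (proj F w j)) ⟨j⟩
    rw [NatTrans.comp_app, NatTrans.comp_app] at h
    simp at h
    show eqToHom (extObj_right_i F j (Under.mk (w.hom.app ⟨j⟩))).symm ≫
        (α.hom.app (extObj F j (Under.mk (w.hom.app ⟨j⟩)))).app ⟨j⟩ ≫
        eqToHom (extObj_right_i F j (Under.mk (w.hom.app ⟨j⟩))) = (α.hom.app w).app ⟨j⟩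
    erw [← h]
    simp

end IsotropyDiscreteAux


/-- For a small discrete category (the discrete category on a type `ι` of objects) and a
functor `F : Discrete ι ⥤ Grp`, i.e. an `ι`-indexed family of groups, the covariant
isotropy group `Z(F)` of `F` in the functor category `Grp^(Discrete ι)` is isomorphic to
the product group `∏ i, Z(F(i))` of the covariant isotropy groups of the components. -/
theorem isotropy_of_discrete_diagram {ι : Type u} (F : Discrete ι ⥤ GrpCat.{u}) :
    Nonempty (Aut (Under.forget F) ≃*
      (∀ i : ι, Aut (Under.forget (F.obj ⟨i⟩)))) := by
  exact ⟨(MulEquiv.ofBijective (IsotropyDiscreteAux.phi F)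
    ⟨IsotropyDiscreteAux.phi_injective F, IsotropyDiscreteAux.phi_surjective F⟩).symm⟩
end

section
/- Let f, g : A ⟶ B be a parallel pair of group homomorphisms, regarded as a functor F from the walking parallel pair category to Grp. Then the covariant isotropy group Z(F) of F in the functor category Grp^J (J the walking parallel pair) is isomorphic as a group to the equalizer of the two group homomorphisms Z(f), Z(g) : Z(A) → Z(B), i.e. to the subgroup {π ∈ Z(A) : Z(f)(π) = Z(g)(π)} of Z(A), where for a group homomorphism h : A → B the induced homomorphism Z(h) : Z(A) → Z(B) sends a family π = (π_u)_{u ∈ Dom(A)} to the family (π_{u ∘ h})_{u ∈ Dom(B)}. -/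
open CategoryTheory CategoryTheory.Limits

universe v u

/-- Precomposition with `h : A ⟶ B`, as a group homomorphism between covariant isotropy
groups `Z(h) : Z(A) → Z(B)`: it sends a coherent family `(π_u)_{u ∈ Dom(A)}` (a natural
automorphism of the projection `A/𝒞 ⥤ 𝒞`) to the family `(π_{u ∘ h})_{u ∈ Dom(B)}`. -/
def precompAut {C : Type u} [Category.{v} C] {A B : C} (h : A ⟶ B) :
    Aut (Under.forget A) →* Aut (Under.forget B) where
  toFun π :=
    { hom :=
        { app := fun u => π.hom.app ((Under.map h).obj u)
          naturality := fun u v w => π.hom.naturality ((Under.map h).map w) }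
      inv :=
        { app := fun u => π.inv.app ((Under.map h).obj u)
          naturality := fun u v w => π.inv.naturality ((Under.map h).map w) }
      hom_inv_id := by ext u; exact π.hom_inv_id_app _
      inv_hom_id := by ext u; exact π.inv_hom_id_app _ }
  map_one' := rfl
  map_mul' _ _ := rfl

namespace IsotropyAux

open WalkingParallelPair WalkingParallelPairHom

variable {A B : GrpCat.{u}} (f g : A ⟶ B)

/-- The trivial group. -/
abbrev triv : GrpCat.{u} := GrpCat.of PUnit.{u+1}

lemma trivHom_eq {X : GrpCat.{u}} (a b : X ⟶ triv) : a = b := by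
  ext x

/-- The parallel pair of trivial maps `X ⇉ 1`. -/
def TT (X : GrpCat.{u}) : WalkingParallelPair ⥤ GrpCat.{u} := parallelPair (1 : X ⟶ triv) 1

/-- The object of `Under (parallelPair f g)` determined by `u : A ⟶ X` (with trivial
one-component). -/
def mkT {X : GrpCat.{u}} (u : A ⟶ X) : Under (parallelPair f g) :=
  Under.mk (Y := TT X)
    (parallelPairHom f g _ _ u (1 : B ⟶ triv) (trivHom_eq _ _) (trivHom_eq _ _))

def pr1 (Y : GrpCat.{u}) : GrpCat.of (Y × Y) ⟶ Y := GrpCat.ofHom (MonoidHom.fst Y Y)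
def pr2 (Y : GrpCat.{u}) : GrpCat.of (Y × Y) ⟶ Y := GrpCat.ofHom (MonoidHom.snd Y Y)

/-- The parallel pair of projections `Y × Y ⇉ Y`. -/
def NN (Y : GrpCat.{u}) : WalkingParallelPair ⥤ GrpCat.{u} := parallelPair (pr1 Y) (pr2 Y)

/-- The object of `Under (parallelPair f g)` determined by `v : B ⟶ Y`, with zero-component
`(f ≫ v, g ≫ v) : A ⟶ Y × Y`. -/
def mkN {Y : GrpCat.{u}} (v : B ⟶ Y) : Under (parallelPair f g) :=
  Under.mk (Y := NN Y)
    (parallelPairHom f g _ _ (GrpCat.ofHom (MonoidHom.prod (f ≫ v).hom (g ≫ v).hom)) v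
      (by ext a; rfl) (by ext a; rfl))

def toT (G : WalkingParallelPair ⥤ GrpCat.{u}) : G ⟶ TT (G.obj zero) where
  app j := match j with
    | zero => 𝟙 _
    | one => (1 : G.obj one ⟶ triv)
  naturality i j h := by
    change WalkingParallelPairHom i j at h
    cases h with
    | left => exact trivHom_eq _ _
    | right => exact trivHom_eq _ _
    | id => cases i <;> simp <;> ext <;> rfl

def toN (G : WalkingParallelPair ⥤ GrpCat.{u}) : G ⟶ NN (G.obj one) where
  app j := match j with
    | zero => GrpCat.ofHom (MonoidHom.prod (G.map left).hom (G.map right).hom)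
    | one => 𝟙 _
  naturality i j h := by
    change WalkingParallelPairHom i j at h
    cases h with
    | left => ext x; rfl
    | right => ext x; rfl
    | id => cases i <;> simp <;> ext <;> rfl

variable (π : Aut (Under.forget (parallelPair f g)))

/-- Projection `mkN v ⟶ mkT (f ≫ v)`. -/
def m1 {Y : GrpCat.{u}} (v : B ⟶ Y) : mkN f g v ⟶ mkT f g (f ≫ v) :=
  Under.homMk (parallelPairHom (pr1 Y) (pr2 Y) _ _ (pr1 Y) (1 : Y ⟶ triv)
      (trivHom_eq _ _) (trivHom_eq _ _))
    (by
      ext j x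
      cases j
      · rfl
      · exact @Subsingleton.elim PUnit.{u+1} _ _ _)

/-- Projection `mkN v ⟶ mkT (g ≫ v)`. -/
def m2 {Y : GrpCat.{u}} (v : B ⟶ Y) : mkN f g v ⟶ mkT f g (g ≫ v) :=
  Under.homMk (parallelPairHom (pr1 Y) (pr2 Y) _ _ (pr2 Y) (1 : Y ⟶ triv)
      (trivHom_eq _ _) (trivHom_eq _ _))
    (by
      ext j x
      cases j
      · rfl
      · exact @Subsingleton.elim PUnit.{u+1} _ _ _)

lemma key1 {Y : GrpCat.{u}} (v : B ⟶ Y) :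
    (π.hom.app (mkT f g (f ≫ v))).app zero = (π.hom.app (mkN f g v)).app one := by
  have hnat := congrArg (fun t => NatTrans.app t zero) (π.hom.naturality (m1 f g v))
  have hint := (π.hom.app (mkN f g v)).naturality left
  ext y
  exact DFunLike.congr_fun (congrArg GrpCat.Hom.hom (hnat.trans hint.symm)) ((y, 1) : ↑Y × ↑Y)

lemma key2 {Y : GrpCat.{u}} (v : B ⟶ Y) :
    (π.hom.app (mkT f g (g ≫ v))).app zero = (π.hom.app (mkN f g v)).app one := by
  have hnat := congrArg (fun t => NatTrans.app t zero) (π.hom.naturality (m2 f g v))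
  have hint := (π.hom.app (mkN f g v)).naturality right
  ext y
  exact DFunLike.congr_fun (congrArg GrpCat.Hom.hom (hnat.trans hint.symm)) ((1, y) : ↑Y × ↑Y)

lemma keyT {Y : GrpCat.{u}} (v : B ⟶ Y) :
    (π.hom.app (mkT f g (f ≫ v))).app zero = (π.hom.app (mkT f g (g ≫ v))).app zero :=
  (key1 f g π v).trans (key2 f g π v).symm

/-- The canonical morphism `α ⟶ mkT (α.hom.app zero)` in `Under (parallelPair f g)`. -/
def mZero (α : Under (parallelPair f g)) : α ⟶ mkT f g (α.hom.app zero) :=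
  Under.homMk (toT α.right)
    (by
      ext j x
      cases j
      · rfl
      · exact @Subsingleton.elim PUnit.{u+1} _ _ _)

/-- The canonical morphism `α ⟶ mkN (α.hom.app one)` in `Under (parallelPair f g)`. -/
def mOne (α : Under (parallelPair f g)) : α ⟶ mkN f g (α.hom.app one) :=
  Under.homMk (toN α.right)
    (by
      ext j x
      cases j
      · refine Prod.ext ?_ ?_
        · exact (DFunLike.congr_fun (congrArg GrpCat.Hom.hom (α.hom.naturality left)) x).symm
        · exact (DFunLike.congr_fun (congrArg GrpCat.Hom.hom (α.hom.naturality right)) x).symm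
      · rfl)

lemma lemZero (α : Under (parallelPair f g)) :
    (π.hom.app (mkT f g (α.hom.app zero))).app zero = (π.hom.app α).app zero := by
  have hnat := congrArg (fun t => NatTrans.app t zero) (π.hom.naturality (mZero f g α))
  have h : 𝟙 _ ≫ (π.hom.app (mkT f g (α.hom.app zero))).app zero =
      (π.hom.app α).app zero ≫ 𝟙 _ := hnat
  exact (Category.id_comp _).symm.trans (h.trans (Category.comp_id _))

lemma lemOne (α : Under (parallelPair f g)) :
    (π.hom.app (mkT f g (f ≫ α.hom.app one))).app zero = (π.hom.app α).app one := by
  rw [key1]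
  have hnat := congrArg (fun t => NatTrans.app t one) (π.hom.naturality (mOne f g α))
  have h : 𝟙 _ ≫ (π.hom.app (mkN f g (α.hom.app one))).app one =
      (π.hom.app α).app one ≫ 𝟙 _ := hnat
  exact (Category.id_comp _).symm.trans (h.trans (Category.comp_id _))

/-- The morphism `mkT u ⟶ mkT u'` induced by `r` with `u ≫ r = u'`. -/
def mT {X X' : GrpCat.{u}} {u : A ⟶ X} {u' : A ⟶ X'} (r : X ⟶ X') (hr : u ≫ r = u') :
    mkT f g u ⟶ mkT f g u' :=
  Under.homMk (parallelPairHom _ _ _ _ r (𝟙 triv) (trivHom_eq _ _) (trivHom_eq _ _))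
    (by
      ext j x
      cases j
      · exact DFunLike.congr_fun (congrArg GrpCat.Hom.hom hr) x
      · exact @Subsingleton.elim PUnit.{u+1} _ _ _)

/-- The forward map `Φ : Z(F) → Z(A)`. -/
def phi : Aut (Under.forget A) :=
  NatIso.ofComponents (fun w => (π.app (mkT f g w.hom)).app zero)
    (fun {w w'} r => by
      have hnat := congrArg (fun t => NatTrans.app t zero)
        (π.hom.naturality (mT f g r.right (Under.w r)))
      exact hnat)

lemma phi_hom_app (w : Under A) :
    (phi f g π).hom.app w = (π.hom.app (mkT f g w.hom)).app zero := rfl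

lemma phi_mem : phi f g π ∈ MonoidHom.eqLocus (precompAut f) (precompAut g) := by
  show precompAut f (phi f g π) = precompAut g (phi f g π)
  apply Iso.ext
  ext u x
  exact DFunLike.congr_fun (congrArg GrpCat.Hom.hom (keyT f g π u.hom)) x

end IsotropyAux

namespace IsotropyAux

open WalkingParallelPair WalkingParallelPairHom

variable {A B : GrpCat.{u}} (f g : A ⟶ B)
variable (ρ : Aut (Under.forget A))

lemma rho_swap (hρ : precompAut f ρ = precompAut g ρ) {Y : GrpCat.{u}} (v : B ⟶ Y) :
    ρ.hom.app (Under.mk (f ≫ v)) = ρ.hom.app (Under.mk (g ≫ v)) :=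
  congrArg (fun t => t.hom.app (Under.mk v)) hρ

variable (hρ : precompAut f ρ = precompAut g ρ)

/-- The inverse map `Ψ : eqLocus → Z(F)`, inner component at `α`. -/
def psiApp (hρ : precompAut f ρ = precompAut g ρ)
    (α : Under (parallelPair f g)) : α.right ≅ α.right :=
  NatIso.ofComponents
    (fun j => match j with
      | zero => ρ.app (Under.mk (α.hom.app zero))
      | one => ρ.app (Under.mk (f ≫ α.hom.app one)))
    (fun {i j} h => by
      change WalkingParallelPairHom i j at h
      cases h with
      | id => simp
      | left =>
        exact ρ.hom.naturality
          (Under.homMk (U := Under.mk (α.hom.app zero))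
            (V := Under.mk (f ≫ α.hom.app one)) (α.right.map left)
            (by simpa using (α.hom.naturality left).symm))
      | right =>
        show α.right.map right ≫ ρ.hom.app (Under.mk (f ≫ α.hom.app one)) = _
        rw [rho_swap f g ρ hρ]
        exact ρ.hom.naturality
          (Under.homMk (U := Under.mk (α.hom.app zero))
            (V := Under.mk (g ≫ α.hom.app one)) (α.right.map right)
            (by simpa using (α.hom.naturality right).symm)))

/-- The inverse map `Ψ : eqLocus → Z(F)`. -/
def psi (hρ : precompAut f ρ = precompAut g ρ) :
    Aut (Under.forget (parallelPair f g)) :=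
  NatIso.ofComponents (fun α => psiApp f g ρ hρ α)
    (fun {α α'} β => by
      apply NatTrans.ext
      funext j
      cases j with
      | zero =>
        exact ρ.hom.naturality
          (Under.homMk (U := Under.mk (α.hom.app zero))
            (V := Under.mk (α'.hom.app zero)) (β.right.app zero)
            (congrArg (fun t => NatTrans.app t zero) (Under.w β)))
      | one =>
        exact ρ.hom.naturality
          (Under.homMk (U := Under.mk (f ≫ α.hom.app one))
            (V := Under.mk (f ≫ α'.hom.app one)) (β.right.app one)
            (by
              have h := congrArg (fun t => NatTrans.app t one) (Under.w β)
              simp only [NatTrans.comp_app] at h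
              show (f ≫ α.hom.app one) ≫ β.right.app one = f ≫ α'.hom.app one
              rw [Category.assoc, h])))

lemma psi_hom_app_zero (α : Under (parallelPair f g)) :
    ((psi f g ρ hρ).hom.app α).app zero = ρ.hom.app (Under.mk (α.hom.app zero)) := rfl

lemma psi_hom_app_one (α : Under (parallelPair f g)) :
    ((psi f g ρ hρ).hom.app α).app one = ρ.hom.app (Under.mk (f ≫ α.hom.app one)) := rfl

lemma app_mk_hom (w : Under A) : ρ.hom.app (Under.mk w.hom) = ρ.hom.app w := by
  obtain ⟨⟨⟨⟩⟩, R, h⟩ := w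
  rfl

end IsotropyAux

open IsotropyAux in
/-- For a parallel pair of group homomorphisms `f, g : A ⟶ B`, regarded as a functor `F`
from the walking parallel pair to `GrpCat`, the covariant isotropy group `Z(F)` in the
functor category is isomorphic to the equalizer of the induced group homomorphisms
`Z(f), Z(g) : Z(A) → Z(B)`, i.e. to the subgroup `{π ∈ Z(A) : Z(f)(π) = Z(g)(π)}`. -/
theorem isotropy_of_parallel_pair (A B : GrpCat.{u}) (f g : A ⟶ B) :
    Nonempty (Aut (Under.forget (parallelPair f g)) ≃*
      MonoidHom.eqLocus (precompAut f) (precompAut g)) := by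
  refine ⟨{
    toFun := fun π => ⟨phi f g π, phi_mem f g π⟩
    invFun := fun ρ => psi f g ρ.1 ρ.2
    left_inv := ?_
    right_inv := ?_
    map_mul' := ?_ }⟩
  · intro π
    apply Iso.ext
    apply NatTrans.ext
    funext α
    apply NatTrans.ext
    funext j
    cases j with
    | zero => exact lemZero f g π α
    | one => exact lemOne f g π α
  · intro ρ
    apply Subtype.ext
    apply Iso.ext
    apply NatTrans.ext
    funext w
    exact app_mk_hom ρ.1 w
  · intro π π'
    apply Subtype.ext
    apply Iso.ext
    apply NatTrans.ext
    funext w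
    rfl
end
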